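/- In the sequential voting mechanism where voter 1 first reports whether her top candidate is M, then voter 2 reports her top candidate (knowing voter 1's report), under the generalized median voter rule electing L if both voters are type L, R if both are type R, and M otherwise, truth-telling is a weakly dominant strategy for both voters; but in the reversed mechanism where voter 2 reports her full preference first and voter 1 observes whether voter 2's top candidate is a and chooses accordingly, truth-telling is not dominant. -/

import Mathlib

/-! Two sequential mechanisms: an incentive compatible sequential voting
mechanism for a generalized median voter scheme, and a reversed mechanism
(for the serial dictatorship of the introduction) in which truth-telling
fails to be dominant. -/

/-- Voter types / candidates: `L`, `M`, `R`. -/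
inductive VT | L | M | R
deriving DecidableEq

open VT

/-- The generalized median voter scheme: `L` is elected iff both voters are of
type `L`, `R` iff both are of type `R`, and `M` otherwise. -/
def gmv (v1 v2 : VT) : VT :=
  if v1 = L ∧ v2 = L then L else if v1 = R ∧ v2 = R then R else M

/-- Utility of a voter of the given type for each candidate: type `L` prefers
`L ≻ M ≻ R`, type `M` prefers `M` above both others (indifferent between them),
and type `R` prefers `R ≻ M ≻ L`. -/
def util : VT → VT → ℚ
  | L, L => 2 | L, M => 1 | L, R => 0
  | M, M => 1 | M, L => 0 | M, R => 0
  | R, R => 2 | R, M => 1 | R, L => 0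

/-- Outcome of the sequential voting mechanism: voter 1 reports `r1`, and
voter 2, observing whether voter 1's (reported) top candidate is `M`, reports
according to her strategy `s2 : Bool → VT`. -/
def seqOutcome (r1 : VT) (s2 : Bool → VT) : VT :=
  gmv r1 (s2 (decide (r1 = M)))

/-- Preferences over the three items `a = 0`, `b = 1`, `c = 2`, reported as a
ranking (`σ k` = the `k`-th ranked item). -/
abbrev IPref := Fin 3 ≃ Fin 3

/-- The reversed (serial dictatorship) mechanism: agent 2 reports a full
ordering `σ` first; agent 1, observing whether agent 2's reported top item is
`a`, picks an item via `s1 : Bool → Fin 3`; agent 2 then receives her reported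
top item among those remaining. -/
def assign2 (s1 : Bool → Fin 3) (σ : IPref) : Fin 3 :=
  let c1 := s1 (decide (σ 0 = 0))
  if σ 0 ≠ c1 then σ 0 else σ 1

theorem gmv_comm (v1 v2 : VT) : gmv v1 v2 = gmv v2 v1 := by
  cases v1 <;> cases v2 <;> rfl

theorem gmv_M_left (v : VT) : gmv M v = M := by
  cases v <;> rfl

theorem util_gmv_le_util_gmv_right (θ v r : VT) : util θ (gmv v r) ≤ util θ (gmv v θ) := by
  cases θ <;> cases r <;> cases v <;> simp [gmv, util]

theorem util_gmv_le_util_gmv_left (θ r v : VT) : util θ (gmv r v) ≤ util θ (gmv θ v) := by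
  rw [gmv_comm r, gmv_comm θ]
  exact util_gmv_le_util_gmv_right θ v r

/- Voter 2 only learns whether voter 1 reported `M`, and after a report of `M` the outcome is `M`
whatever voter 2 does; so a truthful and a deviating voter 1 can always be compared against one
and the same report of voter 2. -/
theorem exists_seqOutcome_eq_gmv (θ r : VT) (s2 : Bool → VT) :
    ∃ v, seqOutcome r s2 = gmv r v ∧ seqOutcome θ s2 = gmv θ v := by
  by_cases hr : r = M
  · subst hr
    exact ⟨s2 (decide (θ = M)), by simp only [seqOutcome, gmv_M_left], rfl⟩
  by_cases hθ : θ = M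
  · subst hθ
    exact ⟨s2 (decide (r = M)), rfl, by simp only [seqOutcome, gmv_M_left]⟩
  exact ⟨s2 false, by simp [seqOutcome, hr], by simp [seqOutcome, hθ]⟩

theorem util_seqOutcome_le_truthful (θ r : VT) (s2 : Bool → VT) :
    util θ (seqOutcome r s2) ≤ util θ (seqOutcome θ s2) := by
  obtain ⟨v, hr, hθ⟩ := exists_seqOutcome_eq_gmv θ r s2
  rw [hr, hθ]
  exact util_gmv_le_util_gmv_left θ r v

def takeAOrC (topIsA : Bool) : Fin 3 :=
  if topIsA then 0 else 2

def rankingCAB : IPref :=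
  ⟨![2, 0, 1], ![1, 2, 0], by decide, by decide⟩

theorem assign2_takeAOrC_refl : assign2 takeAOrC (Equiv.refl _) = 1 := rfl

/- Reporting `c` on top hides agent 2's interest in `a`, so agent 1 takes `c` and agent 2 gets `a`
instead of the `b` she gets when truthful. -/
theorem assign2_takeAOrC_rankingCAB : assign2 takeAOrC rankingCAB = 0 := rfl

/-- **(i)** In the sequential voting mechanism, truth-telling is weakly
dominant for both voters; **(ii)** in the reversed mechanism, truth-telling is
not dominant: some reactive strategy of the informed agent makes a misreport
strictly profitable for the first mover. -/
theorem sequential_voting_ic_and_reversed_not_ic :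
    ((∀ (θ1 : VT) (s2 : Bool → VT) (r1 : VT),
        util θ1 (seqOutcome r1 s2) ≤ util θ1 (seqOutcome θ1 s2)) ∧
     (∀ (θ2 : VT) (r1 : VT) (s2' : Bool → VT),
        util θ2 (gmv r1 (s2' (decide (r1 = M)))) ≤ util θ2 (gmv r1 θ2))) ∧
    ¬ (∀ (s1 : Bool → Fin 3) (σtrue σrep : IPref),
        σtrue.symm (assign2 s1 σtrue) ≤ σtrue.symm (assign2 s1 σrep)) := by
  refine ⟨⟨fun θ1 s2 r1 => util_seqOutcome_le_truthful θ1 r1 s2,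
    fun θ2 r1 _ => util_gmv_le_util_gmv_right θ2 r1 _⟩, fun h => ?_⟩
  have truthful_le_misreport := h takeAOrC (Equiv.refl _) rankingCAB
  rw [assign2_takeAOrC_refl, assign2_takeAOrC_rankingCAB] at truthful_le_misreport
  exact absurd truthful_le_misreport (by decide)
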